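/- For η ∈ ℝ, define the 4×4 symmetric real matrix M(η) := [[(9−2η)/2, −(3−η)/2, −(6−η)/4, −(6−η)/4], [−(3−η)/2, 1/2, (2−η)/4, (2−η)/4], [−(6−η)/4, (2−η)/4, 1/2, 1/2], [−(6−η)/4, (2−η)/4, 1/2, 1/2]]. Then: (i) for every η ∈ [0,3], M(η) is positive semidefinite; (ii) for every η ∈ [0,3], the vectors u = (1/2, 1/2, 1, 0)ᵀ and v = (1/2, 1/2, 0, 1)ᵀ satisfy M(η)u = 0 and M(η)v = 0; and (iii) for every η ∈ (0,3), the kernel of M(η) is exactly the span of u and v (i.e., M(η) has rank 2). -/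

import Mathlib

/-!
Since `M(η)` annihilates `u` and `v`, its quadratic form at `z` equals its value at
`z - z₂ u - z₃ v = (p, q, 0, 0)`, where `p = z₀ - (z₂ + z₃)/2` and `q = z₁ - (z₂ + z₃)/2`.
There only the leading 2×2 block of `M(η)` acts, and completing the square in `q` gives
`zᵀ M(η) z = ((q - (3 - η) p)² + η (4 - η) p²) / 2`.
This is nonnegative for `η ∈ [0, 4]`, and for `η ∈ (0, 4)` it vanishes only when `p = q = 0`.
-/

noncomputable section

/-- The 4×4 matrix arising in the certificate proof that the pattern `(3-η, 3/2)` is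
straightforward. -/
def certM (η : ℝ) : Matrix (Fin 4) (Fin 4) ℝ :=
  !![(9 - 2 * η) / 2, -(3 - η) / 2, -(6 - η) / 4, -(6 - η) / 4;
     -(3 - η) / 2, 1 / 2, (2 - η) / 4, (2 - η) / 4;
     -(6 - η) / 4, (2 - η) / 4, 1 / 2, 1 / 2;
     -(6 - η) / 4, (2 - η) / 4, 1 / 2, 1 / 2]

/-- The two kernel vectors `u` and `v`. -/
def uvec : Fin 4 → ℝ := ![1 / 2, 1 / 2, 1, 0]
def vvec : Fin 4 → ℝ := ![1 / 2, 1 / 2, 0, 1]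

end

open Matrix

lemma certM_isHermitian (η : ℝ) : (certM η).IsHermitian := by
  ext i j
  fin_cases i <;> fin_cases j <;> rfl

lemma certM_mulVec_uvec (η : ℝ) : certM η *ᵥ uvec = 0 := by
  ext i
  fin_cases i <;> simp only [certM, uvec, mulVec, dotProduct, Fin.sum_univ_four, Pi.zero_apply,
    Fin.zero_eta, Fin.mk_one, Fin.reduceFinMk, of_apply, cons_val', cons_val_fin_one,
    cons_val_zero, cons_val_one, cons_val] <;> ring

lemma certM_mulVec_vvec (η : ℝ) : certM η *ᵥ vvec = 0 := by
  ext i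
  fin_cases i <;> simp only [certM, vvec, mulVec, dotProduct, Fin.sum_univ_four, Pi.zero_apply,
    Fin.zero_eta, Fin.mk_one, Fin.reduceFinMk, of_apply, cons_val', cons_val_fin_one,
    cons_val_zero, cons_val_one, cons_val] <;> ring

lemma dotProduct_certM_mulVec (η : ℝ) (z : Fin 4 → ℝ) :
    z ⬝ᵥ certM η *ᵥ z =
      (z 1 - (z 2 + z 3) / 2 - (3 - η) * (z 0 - (z 2 + z 3) / 2)) ^ 2 / 2
        + η * (4 - η) * (z 0 - (z 2 + z 3) / 2) ^ 2 / 2 := by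
  simp only [certM, mulVec, dotProduct, Fin.sum_univ_four, of_apply, cons_val',
    cons_val_fin_one, cons_val_zero, cons_val_one, cons_val]
  ring

lemma eq_smul_uvec_add_smul_vvec {z : Fin 4 → ℝ} (h0 : z 0 - (z 2 + z 3) / 2 = 0)
    (h1 : z 1 - (z 2 + z 3) / 2 = 0) : z = z 2 • uvec + z 3 • vvec := by
  ext i
  fin_cases i <;> simp only [uvec, vvec, Pi.add_apply, Pi.smul_apply, smul_eq_mul,
    Fin.zero_eta, Fin.mk_one, Fin.reduceFinMk, cons_val_zero, cons_val_one, cons_val] <;> linarith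

lemma certM_posSemidef {η : ℝ} (hη0 : 0 ≤ η) (hη4 : η ≤ 4) : (certM η).PosSemidef := by
  refine .of_dotProduct_mulVec_nonneg (certM_isHermitian η) fun z => ?_
  rw [star_trivial, dotProduct_certM_mulVec]
  have : 0 ≤ η * (4 - η) := mul_nonneg hη0 (by linarith)
  positivity

lemma certM_mulVec_eq_zero_iff {η : ℝ} (hη0 : 0 < η) (hη4 : η < 4) (z : Fin 4 → ℝ) :
    certM η *ᵥ z = 0 ↔ ∃ α β : ℝ, z = α • uvec + β • vvec := by
  constructor
  · intro hz
    have hform := dotProduct_certM_mulVec η z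
    rw [hz, dotProduct_zero] at hform
    have hη : 0 < η * (4 - η) := mul_pos hη0 (by linarith)
    obtain ⟨hq, hp⟩ := (add_eq_zero_iff_of_nonneg (by positivity) (by positivity)).mp hform.symm
    have hp0 : z 0 - (z 2 + z 3) / 2 = 0 := by simpa [hη.ne'] using hp
    rw [hp0, mul_zero, sub_zero] at hq
    exact ⟨z 2, z 3, eq_smul_uvec_add_smul_vvec hp0 (by simpa using hq)⟩
  · rintro ⟨α, β, rfl⟩
    simp [mulVec_add, mulVec_smul, certM_mulVec_uvec, certM_mulVec_vvec]

/-- (i) `M(η) ⪰ 0` for `η ∈ [0,3]`; (ii) `u` and `v` are in its kernel for `η ∈ [0,3]`;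
(iii) for `η ∈ (0,3)` the kernel of `M(η)` is exactly the span of `u` and `v`. -/
theorem certM_psd_and_kernel :
    (∀ η : ℝ, 0 ≤ η → η ≤ 3 → (certM η).PosSemidef)
    ∧ (∀ η : ℝ, 0 ≤ η → η ≤ 3 →
        (certM η).mulVec uvec = 0 ∧ (certM η).mulVec vvec = 0)
    ∧ (∀ η : ℝ, 0 < η → η < 3 →
        ∀ z : Fin 4 → ℝ, (certM η).mulVec z = 0 ↔ ∃ α β : ℝ, z = α • uvec + β • vvec) :=
  ⟨fun _ h0 h3 => certM_posSemidef h0 (by linarith),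
    fun η _ _ => ⟨certM_mulVec_uvec η, certM_mulVec_vvec η⟩,
    fun _ h0 h3 => certM_mulVec_eq_zero_iff h0 (by linarith)⟩
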